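/- Let W be a standard Brownian motion on [0,1], b ∈ (1, 2^{1/4}), and c_π := 2^{10}/π². Let O := ∑_{n=0}^∞ 1{∃ s ∈ [0,1] : sup_{t ∈ [s-2^{-n}, s+2^{-n}] ∩ [0,1]} |W(s)-W(t)|/2^{-n} ≤ b^n}. Then for all k ≥ 1, P(O ≥ k) ≤ 2·e^{9/8}·[k·(2c_π/b⁴ + 1) + 1]·(b⁴/2)^k. -/

import Mathlib

/-!
If some `s ∈ [0,1]` has all difference quotients of `W` at scale `2^{-n}` bounded by `b^n`,
then `s` lies in a dyadic block `[j 2^{-n}, (j+1) 2^{-n}]` on which the four consecutive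
increments of mesh `2^{-n}/4` are all at most `2 b^n 2^{-n}` in absolute value. By independence
of increments and the bound `1/√(2πv)` on the Gaussian density this has probability at most
`c_π (b⁴/4)^n`, so a union bound over the `2^n` blocks gives `P(E_n) ≤ c_π q^n` with
`q = b⁴/2 < 1`. If at least `k` of the events `E_n` occur, one with `n ≥ k - 1` does, so
`P(O ≥ k) ≤ c_π q^{k-1}/(1-q)`; together with the trivial bound `1` this is at most
`k c_π q^{k-1}`, which is below the claimed bound.
-/

open MeasureTheory ProbabilityTheory Set Real
open scoped ENNReal NNReal

/-- A standard (scalar) Brownian motion on a probability space. -/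
structure IsBrownianMotion {Ω : Type*} [MeasurableSpace Ω] (P : Measure Ω)
    (W : ℝ → Ω → ℝ) : Prop where
  meas : ∀ t, Measurable (W t)
  init : ∀ᵐ ω ∂P, W 0 ω = 0
  cont : ∀ᵐ ω ∂P, Continuous fun t => W t ω
  incr_law : ∀ s t : ℝ, s ≤ t →
    Measure.map (fun ω => W t ω - W s ω) P = gaussianReal 0 (Real.toNNReal (t - s))
  indep_incr : ∀ (n : ℕ) (t : ℕ → ℝ), Monotone t →
    iIndepFun
      (fun (i : Fin n) ω => W (t (i + 1)) ω - W (t i) ω) P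

namespace ProbabilityTheory

lemma gaussianPDFReal_le (μ : ℝ) (v : ℝ≥0) (x : ℝ) :
    gaussianPDFReal μ v x ≤ (√(2 * π * v))⁻¹ := by
  rw [gaussianPDFReal]
  refine mul_le_of_le_one_right (by positivity) (Real.exp_le_one_iff.2 ?_)
  exact div_nonpos_of_nonpos_of_nonneg (neg_nonpos.2 (sq_nonneg _)) (by positivity)

lemma gaussianReal_Icc_le (μ : ℝ) {v : ℝ≥0} (hv : v ≠ 0) (a b : ℝ) :
    gaussianReal μ v (Icc a b) ≤ ENNReal.ofReal ((b - a) / √(2 * π * v)) := by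
  rw [gaussianReal_apply μ hv]
  calc ∫⁻ x in Icc a b, gaussianPDF μ v x
      ≤ ∫⁻ _ in Icc a b, ENNReal.ofReal (√(2 * π * v))⁻¹ :=
        lintegral_mono fun x => ENNReal.ofReal_le_ofReal (gaussianPDFReal_le μ v x)
    _ = ENNReal.ofReal ((b - a) / √(2 * π * v)) := by
        rw [setLIntegral_const, Real.volume_Icc, ← ENNReal.ofReal_mul (by positivity),
          div_eq_inv_mul]

end ProbabilityTheory

lemma setOf_abs_sub_le_eq_preimage {Ω : Type*} (W : ℝ → Ω → ℝ) (s t ε : ℝ) :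
    {ω | |W t ω - W s ω| ≤ ε} = (fun ω => W t ω - W s ω) ⁻¹' Icc (-ε) ε := by
  ext ω
  simp [abs_le]

lemma exists_lt_mem_Icc_natCast {N : ℕ} (hN : 0 < N) {x : ℝ} (hx : x ∈ Icc 0 (N : ℝ)) :
    ∃ j < N, x ∈ Icc (j : ℝ) (j + 1) := by
  rcases hx.2.lt_or_eq with hlt | rfl
  · exact ⟨⌊x⌋₊, (Nat.floor_lt hx.1).2 hlt, Nat.floor_le hx.1, (Nat.lt_floor_add_one x).le⟩
  · refine ⟨N - 1, by omega, ?_⟩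
    rw [Nat.cast_pred hN]
    constructor <;> linarith

noncomputable def blockGrid (N m j l : ℕ) : ℝ := (j + l / m) / N

lemma blockGrid_succ_sub (N m j l : ℕ) :
    blockGrid N m j (l + 1) - blockGrid N m j l = (m : ℝ)⁻¹ / N := by
  simp only [blockGrid]
  push_cast
  ring

lemma blockGrid_mem_Icc (N m j : ℕ) {l : ℕ} (hl : l ≤ m) :
    blockGrid N m j l ∈ Icc ((j : ℝ) / N) ((j + 1) / N) := by
  have hlm : (l : ℝ) / m ≤ 1 := div_le_one_of_le₀ (by exact_mod_cast hl) (by positivity)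
  unfold blockGrid
  constructor
  · gcongr
    exact le_add_of_nonneg_right (by positivity)
  · gcongr

lemma exists_blockGrid_abs_sub_le (f : ℝ → ℝ) {N : ℕ} (hN : 0 < N) (m : ℕ) {s L : ℝ}
    (hs : s ∈ Icc (0 : ℝ) 1)
    (hf : ∀ u ∈ Icc (s - (N : ℝ)⁻¹) (s + (N : ℝ)⁻¹) ∩ Icc 0 1, |f s - f u| ≤ L) :
    ∃ j < N, ∀ i < m, |f (blockGrid N m j (i + 1)) - f (blockGrid N m j i)| ≤ 2 * L := by
  have hN' : (0 : ℝ) < N := by exact_mod_cast hN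
  obtain ⟨j, hj, hjs⟩ := exists_lt_mem_Icc_natCast hN
    ⟨by nlinarith [hs.1], by nlinarith [hs.2]⟩ (x := s * N)
  have hj1 : ((j : ℝ) + 1) / N ≤ 1 := by
    rw [div_le_one hN']
    exact_mod_cast hj
  have hsj : s ∈ Icc ((j : ℝ) / N) ((j + 1) / N) := by
    constructor
    · rw [div_le_iff₀ hN']; exact hjs.1
    · rw [le_div_iff₀ hN']; exact hjs.2
  have hwindow : ∀ l ≤ m, |f s - f (blockGrid N m j l)| ≤ L := by
    intro l hl
    obtain ⟨hlo, hhi⟩ := blockGrid_mem_Icc N m j hl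
    have hwidth : ((j : ℝ) + 1) / N = j / N + (N : ℝ)⁻¹ := by field_simp
    refine hf _ ⟨⟨?_, ?_⟩, ?_, ?_⟩
    all_goals linarith [hsj.1, hsj.2, show (0 : ℝ) ≤ j / N by positivity]
  refine ⟨j, hj, fun i hi => ?_⟩
  calc |f (blockGrid N m j (i + 1)) - f (blockGrid N m j i)|
      = |(f s - f (blockGrid N m j i)) - (f s - f (blockGrid N m j (i + 1)))| := by ring_nf
    _ ≤ |f s - f (blockGrid N m j i)| + |f s - f (blockGrid N m j (i + 1))| := abs_sub _ _
    _ ≤ 2 * L := by linarith [hwindow i hi.le, hwindow (i + 1) hi]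

/-- The event `E^n_{b^n}` of the Paley–Wiener–Zygmund argument. -/
def slowPointEvent {Ω : Type*} (W : ℝ → Ω → ℝ) (b : ℝ) (n : ℕ) : Set Ω :=
  {ω | ∃ s ∈ Icc (0 : ℝ) 1,
    ∀ u ∈ Icc (s - (2 : ℝ) ^ (-(n : ℤ))) (s + (2 : ℝ) ^ (-(n : ℤ))) ∩ Icc (0 : ℝ) 1,
      |W s ω - W u ω| / (2 : ℝ) ^ (-(n : ℤ)) ≤ b ^ n}

namespace IsBrownianMotion

variable {Ω : Type*} [MeasurableSpace Ω] {P : Measure Ω} {W : ℝ → Ω → ℝ}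

lemma measure_abs_sub_le_le (hW : IsBrownianMotion P W) {s t : ℝ} (hst : s < t) (ε : ℝ) :
    P {ω | |W t ω - W s ω| ≤ ε} ≤ ENNReal.ofReal (2 * ε / √(2 * π * (t - s))) := by
  have hmeas : Measurable fun ω => W t ω - W s ω := (hW.meas t).sub (hW.meas s)
  rw [setOf_abs_sub_le_eq_preimage, ← Measure.map_apply hmeas measurableSet_Icc,
    hW.incr_law s t hst.le]
  have hv : (t - s).toNNReal ≠ 0 := by simpa using hst
  convert gaussianReal_Icc_le 0 hv (-ε) ε using 3 <;> simp [hst.le]; ring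

lemma measure_iInter_abs_sub_le_le (hW : IsBrownianMotion P W) {t : ℕ → ℝ} {h : ℝ}
    (hh : 0 < h) (ht : ∀ i, t (i + 1) - t i = h) (m : ℕ) (ε : ℝ) :
    P (⋂ i : Fin m, {ω | |W (t (i + 1)) ω - W (t i) ω| ≤ ε})
      ≤ ENNReal.ofReal (2 * ε / √(2 * π * h)) ^ m := by
  have hmono : Monotone t := monotone_nat_of_le_succ fun i => by linarith [ht i]
  rw [(hW.indep_incr m t hmono).meas_iInter fun i =>
    ⟨Icc (-ε) ε, measurableSet_Icc, (setOf_abs_sub_le_eq_preimage W _ _ ε).symm⟩]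
  calc ∏ i : Fin m, P {ω | |W (t (i + 1)) ω - W (t i) ω| ≤ ε}
      ≤ ∏ _i : Fin m, ENNReal.ofReal (2 * ε / √(2 * π * h)) :=
        Finset.prod_le_prod' fun i _ => by
          simpa [ht] using
            hW.measure_abs_sub_le_le (s := t i) (t := t (i + 1)) (by linarith [ht i]) ε
    _ = _ := by simp

lemma measure_slowPointEvent_le (hW : IsBrownianMotion P W) {b : ℝ} (hb : 0 ≤ b) (n : ℕ) :
    P (slowPointEvent W b n) ≤ ENNReal.ofReal (2 ^ 10 / π ^ 2 * (b ^ 4 / 2) ^ n) := by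
  set N : ℕ := 2 ^ n with hNdef
  have hN : 0 < N := by positivity
  have hscale : (2 : ℝ) ^ (-(n : ℤ)) = (N : ℝ)⁻¹ := by simp [N]
  have hcover : slowPointEvent W b n ⊆ ⋃ j ∈ Finset.range N, ⋂ i : Fin 4,
      {ω | |W (blockGrid N 4 j (i + 1)) ω - W (blockGrid N 4 j i) ω|
        ≤ 2 * (b ^ n * (N : ℝ)⁻¹)} := by
    rintro ω ⟨s, hs, hω⟩
    rw [hscale] at hω
    obtain ⟨j, hj, hincr⟩ := exists_blockGrid_abs_sub_le (W · ω) hN 4 hs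
      fun u hu => (div_le_iff₀ (by positivity)).1 (hω u hu)
    exact mem_biUnion (Finset.mem_range.2 hj) (mem_iInter.2 fun i => hincr i i.2)
  have hmesh : (0 : ℝ) < (4 : ℝ)⁻¹ / N := by positivity
  refine (measure_mono hcover).trans ((measure_biUnion_finset_le _ _).trans ?_)
  calc _ ≤ ∑ _j ∈ Finset.range N,
          ENNReal.ofReal (2 * (2 * (b ^ n * (N : ℝ)⁻¹)) / √(2 * π * ((4 : ℝ)⁻¹ / N))) ^ 4 :=
        Finset.sum_le_sum fun j _ => hW.measure_iInter_abs_sub_le_le hmesh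
          (fun l => by exact_mod_cast blockGrid_succ_sub N 4 j l) 4 _
    _ = ENNReal.ofReal (2 ^ 10 / π ^ 2 * (b ^ 4 / 2) ^ n) := by
        rw [Finset.sum_const, Finset.card_range, nsmul_eq_mul,
          ← ENNReal.ofReal_pow (by positivity), ← ENNReal.ofReal_natCast,
          ← ENNReal.ofReal_mul (by positivity)]
        congr 1
        have hsqrt : √(2 * π * ((4 : ℝ)⁻¹ / N)) ^ 4 = (2 * π * ((4 : ℝ)⁻¹ / N)) ^ 2 := by
          rw [show 4 = 2 * 2 by rfl, pow_mul, Real.sq_sqrt (by positivity)]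
        rw [div_pow, hsqrt, hNdef, div_pow (b ^ 4)]
        push_cast
        field_simp
        ring

end IsBrownianMotion

section Counting

variable {Ω : Type*}

lemma setOf_le_tsum_indicator_subset (E : ℕ → Set Ω) {k : ℕ} (hk : 1 ≤ k) :
    {ω | (k : ℝ≥0∞) ≤ ∑' n, (E n).indicator (fun _ => 1) ω} ⊆ ⋃ n, E (n + (k - 1)) := by
  intro ω (hω : (k : ℝ≥0∞) ≤ _)
  by_contra hnot
  simp only [mem_iUnion, not_exists] at hnot
  have hzero : ∀ n ∉ Finset.range (k - 1), (E n).indicator (fun _ => (1 : ℝ≥0∞)) ω = 0 := by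
    intro n hn
    have hkn : k - 1 ≤ n := not_lt.1 (Finset.mem_range.not.1 hn)
    exact indicator_of_notMem (by simpa [Nat.sub_add_cancel hkn] using hnot (n - (k - 1))) _
  have hcount : ∑ n ∈ Finset.range (k - 1), (E n).indicator (fun _ => (1 : ℝ≥0∞)) ω
      ≤ (k - 1 : ℕ) := by
    have h := Finset.sum_le_card_nsmul (Finset.range (k - 1))
      (fun n => (E n).indicator (fun _ => (1 : ℝ≥0∞)) ω) 1
      fun n _ => indicator_apply_le' (fun _ => le_rfl) fun _ => zero_le_one
    rwa [Finset.card_range, nsmul_one] at h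
  rw [tsum_eq_sum hzero] at hω
  have hk' : (k : ℝ≥0∞) ≤ (k - 1 : ℕ) := hω.trans hcount
  norm_cast at hk'
  omega

lemma measure_setOf_le_tsum_indicator_le [MeasurableSpace Ω] (μ : Measure Ω)
    [IsProbabilityMeasure μ] (E : ℕ → Set Ω) {c q : ℝ} (hc : 1 ≤ c) (hq0 : 0 ≤ q) (hq1 : q < 1)
    (hE : ∀ n, μ (E n) ≤ ENNReal.ofReal (c * q ^ n)) {k : ℕ} (hk : 1 ≤ k) :
    μ {ω | (k : ℝ≥0∞) ≤ ∑' n, (E n).indicator (fun _ => 1) ω}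
      ≤ ENNReal.ofReal (k * c * q ^ (k - 1)) := by
  have hk1 : (1 : ℝ) ≤ k := by exact_mod_cast hk
  have htail : μ {ω | (k : ℝ≥0∞) ≤ ∑' n, (E n).indicator (fun _ => 1) ω}
      ≤ ENNReal.ofReal (c * q ^ (k - 1) / (1 - q)) := by
    calc μ {ω | (k : ℝ≥0∞) ≤ ∑' n, (E n).indicator (fun _ => 1) ω}
        ≤ ∑' n, μ (E (n + (k - 1))) :=
          (measure_mono (setOf_le_tsum_indicator_subset E hk)).trans (measure_iUnion_le _)
      _ ≤ ∑' n, ENNReal.ofReal (c * q ^ (k - 1) * q ^ n) :=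
          ENNReal.tsum_le_tsum fun n => by
            rw [mul_assoc, ← pow_add, add_comm (k - 1) n]; exact hE (n + (k - 1))
      _ = ENNReal.ofReal (c * q ^ (k - 1) / (1 - q)) := by
          rw [← ENNReal.ofReal_tsum_of_nonneg (fun n => by positivity)
            ((summable_geometric_of_lt_one hq0 hq1).mul_left _), tsum_mul_left,
            tsum_geometric_of_lt_one hq0 hq1, div_eq_mul_inv]
  rcases le_or_gt (k * (1 - q)) 1 with hsmall | hlarge
  · -- Bernoulli: `q ^ (k - 1) ≥ 1 + (k - 1) (q - 1) ≥ 1 / k`, so the trivial bound `1` suffices.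
    have hbern := one_add_mul_le_pow (show -2 ≤ q - 1 by linarith) (k - 1)
    rw [add_sub_cancel, Nat.cast_pred hk] at hbern
    have hkq : 1 ≤ k * q ^ (k - 1) := by
      nlinarith [mul_le_mul_of_nonneg_left hsmall (show (0 : ℝ) ≤ k - 1 by linarith)]
    refine prob_le_one.trans (ENNReal.one_le_ofReal.2 ?_)
    nlinarith
  · refine htail.trans (ENNReal.ofReal_le_ofReal ?_)
    rw [div_le_iff₀ (by nlinarith)]
    nlinarith [mul_le_mul_of_nonneg_left hlarge.le
      (show 0 ≤ c * q ^ (k - 1) by positivity)]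

end Counting

/-- Paley–Wiener–Zygmund deviation frequency quantification: with `c_π = 2¹⁰/π²`,
`b ∈ (1, 2^{1/4})`, and
`O = ∑ₙ 1{∃ s ∈ [0,1] : sup_{t ∈ [s-2^{-n},s+2^{-n}] ∩ [0,1]} |W(s)-W(t)|/2^{-n} ≤ bⁿ}`,
for all `k ≥ 1`: `P(O ≥ k) ≤ 2e^{9/8}·[k·(2c_π/b⁴ + 1) + 1]·(b⁴/2)ᵏ`. -/
theorem stmt19 {Ω : Type*} [MeasurableSpace Ω] (P : Measure Ω) [IsProbabilityMeasure P]
    (W : ℝ → Ω → ℝ) (hW : IsBrownianMotion P W)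
    (b : ℝ) (hb : b ∈ Set.Ioo (1 : ℝ) ((2 : ℝ) ^ ((1 : ℝ) / 4)))
    (k : ℕ) (hk : 1 ≤ k) :
    P {ω | (k : ℝ≥0∞) ≤ ∑' n : ℕ, Set.indicator
        {ω' | ∃ s ∈ Set.Icc (0 : ℝ) 1,
          ∀ u ∈ Set.Icc (s - (2 : ℝ) ^ (-(n : ℤ))) (s + (2 : ℝ) ^ (-(n : ℤ))) ∩
              Set.Icc (0 : ℝ) 1,
            |W s ω' - W u ω'| / (2 : ℝ) ^ (-(n : ℤ)) ≤ b ^ n}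
        (fun _ => (1 : ℝ≥0∞)) ω}
      ≤ ENNReal.ofReal (2 * Real.exp (9 / 8) *
          ((k : ℝ) * (2 * (2 ^ 10 / π ^ 2) / b ^ 4 + 1) + 1) * (b ^ 4 / 2) ^ k) := by
  obtain ⟨hb1, hb2⟩ := hb
  have hb4 : b ^ 4 < 2 := by
    calc b ^ 4 < ((2 : ℝ) ^ ((1 : ℝ) / 4)) ^ 4 := by gcongr
      _ = 2 := by rw [← Real.rpow_natCast, ← Real.rpow_mul zero_le_two]; norm_num
  have hc : 1 ≤ (2 : ℝ) ^ 10 / π ^ 2 := by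
    rw [one_le_div (by positivity)]
    nlinarith [Real.pi_lt_four, Real.pi_pos]
  refine (measure_setOf_le_tsum_indicator_le P (slowPointEvent W b) hc (by positivity)
    (by linarith) (hW.measure_slowPointEvent_le (by linarith)) hk).trans
    (ENNReal.ofReal_le_ofReal ?_)
  set c : ℝ := 2 ^ 10 / π ^ 2
  calc k * c * (b ^ 4 / 2) ^ (k - 1) = k * (2 * c / b ^ 4) * (b ^ 4 / 2) ^ k := by
        rw [← pow_sub_mul_pow _ hk, pow_one]
        field_simp
    _ ≤ (k * (2 * c / b ^ 4 + 1) + 1) * (b ^ 4 / 2) ^ k := by gcongr; linarith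
    _ ≤ 2 * Real.exp (9 / 8) * (k * (2 * c / b ^ 4 + 1) + 1) * (b ^ 4 / 2) ^ k := by
        gcongr
        refine le_mul_of_one_le_left (by positivity) ?_
        linarith [Real.add_one_le_exp (9 / 8)]
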